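/- Let $(X,\mathcal{A},\mu)$ be a probability space and $\Phi_1, \Phi_2 : X \to [0, \tilde C]$ measurable functions. Define posteriors $\nu_i(A) = Z_i^{-1}\int_A e^{-\Phi_i}d\mu$ with $Z_i = \int_X e^{-\Phi_i}d\mu$. Then the Hellinger distance satisfies $d_{Hell}(\nu_1, \nu_2)^2 \leq C \int_X |\Phi_1 - \Phi_2|^2\,d\mu$ for a constant $C$ depending only on $\tilde C$. -/

import Mathlib

/-!
Write `√(Zᵢ⁻¹ e^{-Φᵢ}) = Zᵢ^{-1/2} e^{-Φᵢ/2}` and split the difference as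
`Z₁^{-1/2} (e^{-Φ₁/2} - e^{-Φ₂/2}) + (Z₁^{-1/2} - Z₂^{-1/2}) e^{-Φ₂/2}`.
Since `exp` is 1-Lipschitz on `(-∞, 0]`, the first term is at most `Z₁^{-1/2} |Φ₁ - Φ₂| / 2`
pointwise. Since `Zᵢ ≥ e^{-C}`, `z ↦ z^{-1/2}` is Lipschitz on the range of the `Zᵢ`, and
`(Z₁ - Z₂)² ≤ ∫ (e^{-Φ₁} - e^{-Φ₂})² ≤ ∫ |Φ₁ - Φ₂|²` by Jensen and the same Lipschitz bound.
-/

open MeasureTheory Real Set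

open scoped ENNReal

lemma Real.abs_exp_sub_exp_le_of_nonpos {x y : ℝ} (hx : x ≤ 0) (hy : y ≤ 0) :
    |exp x - exp y| ≤ |x - y| := by
  wlog hxy : x ≤ y generalizing x y
  · rw [abs_sub_comm, abs_sub_comm x]
    exact this hy hx (le_of_not_ge hxy)
  rw [abs_of_nonpos (sub_nonpos.2 (exp_le_exp.2 hxy)), abs_of_nonpos (sub_nonpos.2 hxy)]
  have hsplit : exp x = exp y * exp (x - y) := by rw [← exp_add, add_sub_cancel]
  nlinarith [add_one_le_exp (x - y), exp_le_one_iff.2 hy, exp_pos y]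

lemma sq_inv_sub_inv_le {e s t : ℝ} (he : 0 < e) (hs : e ≤ s) (ht : e ≤ t) :
    (s⁻¹ - t⁻¹) ^ 2 ≤ (s ^ 2 - t ^ 2) ^ 2 / (4 * e ^ 6) := by
  have hs₀ : 0 < s := he.trans_le hs
  have ht₀ : 0 < t := he.trans_le ht
  have hden : 2 * e ^ 3 ≤ s * t * (s + t) := by
    have : e * e ≤ s * t := mul_le_mul hs ht he.le hs₀.le
    nlinarith
  calc (s⁻¹ - t⁻¹) ^ 2 = (s ^ 2 - t ^ 2) ^ 2 / (s * t * (s + t)) ^ 2 := by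
        field_simp
        ring
    _ ≤ (s ^ 2 - t ^ 2) ^ 2 / (2 * e ^ 3) ^ 2 := by gcongr
    _ = (s ^ 2 - t ^ 2) ^ 2 / (4 * e ^ 6) := by ring

lemma sq_sqrt_inv_sub_sqrt_inv_le {E Z₁ Z₂ : ℝ} (hE : 0 < E) (h₁ : E ≤ Z₁) (h₂ : E ≤ Z₂) :
    (√Z₁⁻¹ - √Z₂⁻¹) ^ 2 ≤ (Z₁ - Z₂) ^ 2 / (4 * E ^ 3) := by
  have key := sq_inv_sub_inv_le (sqrt_pos.2 hE) (sqrt_le_sqrt h₁) (sqrt_le_sqrt h₂)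
  rwa [sq_sqrt (hE.trans_le h₁).le, sq_sqrt (hE.trans_le h₂).le,
    show √E ^ 6 = E ^ 3 by rw [pow_mul √E 2 3, sq_sqrt hE.le], ← sqrt_inv, ← sqrt_inv] at key

lemma sq_mul_sub_mul_le (a b u v : ℝ) (hv : |v| ≤ 1) :
    (a * u - b * v) ^ 2 ≤ 2 * a ^ 2 * (u - v) ^ 2 + 2 * (a - b) ^ 2 := by
  have hv2 : v ^ 2 ≤ 1 := (sq_le_one_iff_abs_le_one v).2 hv
  calc (a * u - b * v) ^ 2 = (a * (u - v) + (a - b) * v) ^ 2 := by ring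
    _ ≤ 2 * ((a * (u - v)) ^ 2 + ((a - b) * v) ^ 2) := add_sq_le
    _ ≤ 2 * a ^ 2 * (u - v) ^ 2 + 2 * (a - b) ^ 2 := by
      nlinarith [mul_le_mul_of_nonneg_left hv2 (sq_nonneg (a - b))]

lemma sq_sqrt_inv_mul_exp_neg_sub_le {Z₁ Z₂ φ₁ φ₂ : ℝ} (hZ₁ : 0 ≤ Z₁) (hφ₁ : 0 ≤ φ₁)
    (hφ₂ : 0 ≤ φ₂) :
    (√(Z₁⁻¹ * exp (-φ₁)) - √(Z₂⁻¹ * exp (-φ₂))) ^ 2 ≤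
      Z₁⁻¹ / 2 * (φ₁ - φ₂) ^ 2 + 2 * (√Z₁⁻¹ - √Z₂⁻¹) ^ 2 := by
  have hlip : (exp (-φ₁ / 2) - exp (-φ₂ / 2)) ^ 2 ≤ (φ₁ - φ₂) ^ 2 / 4 := by
    have := abs_exp_sub_exp_le_of_nonpos (x := -φ₁ / 2) (y := -φ₂ / 2) (by linarith) (by linarith)
    rw [← sq_le_sq₀ (abs_nonneg _) (abs_nonneg _), sq_abs, sq_abs] at this
    linarith
  have hv : |exp (-φ₂ / 2)| ≤ 1 := by
    rw [abs_of_pos (exp_pos _)]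
    exact exp_le_one_iff.2 (by linarith)
  rw [sqrt_mul' _ (exp_pos _).le, sqrt_mul' _ (exp_pos _).le, ← exp_half, ← exp_half]
  calc _ ≤ 2 * √Z₁⁻¹ ^ 2 * (exp (-φ₁ / 2) - exp (-φ₂ / 2)) ^ 2 + 2 * (√Z₁⁻¹ - √Z₂⁻¹) ^ 2 :=
        sq_mul_sub_mul_le _ _ _ _ hv
    _ ≤ _ := by
      rw [sq_sqrt (inv_nonneg.2 hZ₁)]
      nlinarith [mul_le_mul_of_nonneg_left hlip (inv_nonneg.2 hZ₁)]

section

variable {X : Type*} [MeasurableSpace X] {μ : Measure X} {Φ Φ₁ Φ₂ : X → ℝ} {C : ℝ}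

lemma sq_integral_le_integral_sq [IsProbabilityMeasure μ] {f : X → ℝ} (hf : MemLp f 2 μ) :
    (∫ x, f x ∂μ) ^ 2 ≤ ∫ x, f x ^ 2 ∂μ := by
  have := ProbabilityTheory.variance_nonneg f μ
  rw [ProbabilityTheory.variance_eq_sub hf] at this
  simpa using this

lemma memLp_exp_neg [IsFiniteMeasure μ] (hΦ : Measurable Φ) (h₀ : ∀ x, 0 ≤ Φ x)
    (p : ℝ≥0∞) : MemLp (fun x => exp (-Φ x)) p μ :=
  .of_bound hΦ.neg.exp.aestronglyMeasurable 1 <| .of_forall fun x => by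
    rw [norm_of_nonneg (exp_pos _).le, exp_le_one_iff]
    linarith [h₀ x]

lemma exp_neg_le_integral_exp_neg [IsProbabilityMeasure μ] (hΦ : Measurable Φ)
    (h : ∀ x, Φ x ∈ Icc 0 C) : exp (-C) ≤ ∫ x, exp (-Φ x) ∂μ := by
  calc exp (-C) = ∫ _, exp (-C) ∂μ := by simp
    _ ≤ ∫ x, exp (-Φ x) ∂μ :=
      integral_mono (integrable_const _) ((memLp_exp_neg hΦ (h · |>.1) 1).integrable le_rfl)
        fun x => exp_le_exp.2 (neg_le_neg (h x).2)

lemma integrable_sq_abs_sub [IsFiniteMeasure μ] (hΦ₁ : Measurable Φ₁) (hΦ₂ : Measurable Φ₂)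
    (h₁ : ∀ x, Φ₁ x ∈ Icc 0 C) (h₂ : ∀ x, Φ₂ x ∈ Icc 0 C) :
    Integrable (fun x => |Φ₁ x - Φ₂ x| ^ 2) μ := by
  refine .of_bound (by fun_prop) (C ^ 2) (.of_forall fun x => ?_)
  rw [norm_of_nonneg (sq_nonneg _)]
  gcongr
  rw [abs_sub_le_iff]
  constructor <;> linarith [(h₁ x).1, (h₁ x).2, (h₂ x).1, (h₂ x).2]

lemma sq_integral_exp_neg_sub_le [IsProbabilityMeasure μ] (hΦ₁ : Measurable Φ₁)
    (hΦ₂ : Measurable Φ₂) (h₁ : ∀ x, 0 ≤ Φ₁ x) (h₂ : ∀ x, 0 ≤ Φ₂ x)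
    (hint : Integrable (fun x => |Φ₁ x - Φ₂ x| ^ 2) μ) :
    (∫ x, exp (-Φ₁ x) ∂μ - ∫ x, exp (-Φ₂ x) ∂μ) ^ 2 ≤ ∫ x, |Φ₁ x - Φ₂ x| ^ 2 ∂μ := by
  have hL2 := (memLp_exp_neg (μ := μ) hΦ₁ h₁ 2).sub (memLp_exp_neg hΦ₂ h₂ 2)
  rw [← integral_sub ((memLp_exp_neg hΦ₁ h₁ 1).integrable le_rfl)
    ((memLp_exp_neg hΦ₂ h₂ 1).integrable le_rfl)]
  refine (sq_integral_le_integral_sq hL2).trans (integral_mono hL2.integrable_sq hint fun x => ?_)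
  show (exp (-Φ₁ x) - exp (-Φ₂ x)) ^ 2 ≤ |Φ₁ x - Φ₂ x| ^ 2
  have hlip := abs_exp_sub_exp_le_of_nonpos (neg_nonpos.2 (h₁ x)) (neg_nonpos.2 (h₂ x))
  rw [neg_sub_neg, abs_sub_comm (Φ₂ x)] at hlip
  rw [← sq_abs]
  exact pow_le_pow_left₀ (abs_nonneg _) hlip 2

lemma sq_sqrt_inv_integral_exp_neg_sub_le [IsProbabilityMeasure μ] (hΦ₁ : Measurable Φ₁)
    (hΦ₂ : Measurable Φ₂) (h₁ : ∀ x, Φ₁ x ∈ Icc 0 C) (h₂ : ∀ x, Φ₂ x ∈ Icc 0 C) :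
    (√(∫ x, exp (-Φ₁ x) ∂μ)⁻¹ - √(∫ x, exp (-Φ₂ x) ∂μ)⁻¹) ^ 2 ≤
      exp C ^ 3 / 4 * ∫ x, |Φ₁ x - Φ₂ x| ^ 2 ∂μ :=
  calc _ ≤ (∫ x, exp (-Φ₁ x) ∂μ - ∫ x, exp (-Φ₂ x) ∂μ) ^ 2 / (4 * exp (-C) ^ 3) :=
        sq_sqrt_inv_sub_sqrt_inv_le (exp_pos _) (exp_neg_le_integral_exp_neg hΦ₁ h₁)
          (exp_neg_le_integral_exp_neg hΦ₂ h₂)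
    _ = exp C ^ 3 / 4 * (∫ x, exp (-Φ₁ x) ∂μ - ∫ x, exp (-Φ₂ x) ∂μ) ^ 2 := by
        rw [exp_neg]
        field_simp
    _ ≤ exp C ^ 3 / 4 * ∫ x, |Φ₁ x - Φ₂ x| ^ 2 ∂μ := by
        gcongr
        exact sq_integral_exp_neg_sub_le hΦ₁ hΦ₂ (h₁ · |>.1) (h₂ · |>.1)
          (integrable_sq_abs_sub hΦ₁ hΦ₂ h₁ h₂)

lemma hellinger_sq_posterior_le [IsProbabilityMeasure μ] (hΦ₁ : Measurable Φ₁)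
    (hΦ₂ : Measurable Φ₂) (h₁ : ∀ x, Φ₁ x ∈ Icc 0 C) (h₂ : ∀ x, Φ₂ x ∈ Icc 0 C) :
    (1 / 2) * ∫ x, (√((∫ y, exp (-Φ₁ y) ∂μ)⁻¹ * exp (-Φ₁ x)) -
        √((∫ y, exp (-Φ₂ y) ∂μ)⁻¹ * exp (-Φ₂ x))) ^ 2 ∂μ ≤
      (exp C + exp C ^ 3) / 4 * ∫ x, |Φ₁ x - Φ₂ x| ^ 2 ∂μ := by
  set Z₁ := ∫ y, exp (-Φ₁ y) ∂μ
  set Z₂ := ∫ y, exp (-Φ₂ y) ∂μ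
  set J := ∫ x, |Φ₁ x - Φ₂ x| ^ 2 ∂μ
  have hZ₁ : exp (-C) ≤ Z₁ := exp_neg_le_integral_exp_neg hΦ₁ h₁
  have hZ₁_inv : Z₁⁻¹ ≤ exp C := by
    simpa only [exp_neg, inv_inv] using inv_anti₀ (exp_pos _) hZ₁
  have hJ := integrable_sq_abs_sub (μ := μ) hΦ₁ hΦ₂ h₁ h₂
  have hpt : ∀ x, (√(Z₁⁻¹ * exp (-Φ₁ x)) - √(Z₂⁻¹ * exp (-Φ₂ x))) ^ 2 ≤
      exp C / 2 * |Φ₁ x - Φ₂ x| ^ 2 + 2 * (√Z₁⁻¹ - √Z₂⁻¹) ^ 2 := fun x => by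
    refine (sq_sqrt_inv_mul_exp_neg_sub_le ((exp_pos _).trans_le hZ₁).le (h₁ x).1 (h₂ x).1).trans ?_
    rw [sq_abs]
    gcongr
  have hint : ∫ x, (√(Z₁⁻¹ * exp (-Φ₁ x)) - √(Z₂⁻¹ * exp (-Φ₂ x))) ^ 2 ∂μ ≤
      exp C / 2 * J + 2 * (√Z₁⁻¹ - √Z₂⁻¹) ^ 2 :=
    calc _ ≤ ∫ x, (exp C / 2 * |Φ₁ x - Φ₂ x| ^ 2 + 2 * (√Z₁⁻¹ - √Z₂⁻¹) ^ 2) ∂μ :=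
          integral_mono_of_nonneg (.of_forall fun x => sq_nonneg _)
            ((hJ.const_mul _).add (integrable_const _)) (.of_forall hpt)
      _ = _ := by
        rw [integral_add (hJ.const_mul _) (integrable_const _), integral_const_mul,
          integral_const, probReal_univ, one_smul]
  linarith [sq_sqrt_inv_integral_exp_neg_sub_le (μ := μ) hΦ₁ hΦ₂ h₁ h₂]

end

theorem hellinger_stability_general (Ct : ℝ) :
    ∃ C : ℝ, 0 < C ∧
      ∀ (X : Type) (_ : MeasurableSpace X) (μ : Measure X), IsProbabilityMeasure μ →
        ∀ (Φ₁ Φ₂ : X → ℝ), Measurable Φ₁ → Measurable Φ₂ →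
          (∀ x, Φ₁ x ∈ Set.Icc (0 : ℝ) Ct) → (∀ x, Φ₂ x ∈ Set.Icc (0 : ℝ) Ct) →
          (1 / 2) * ∫ x,
              (Real.sqrt ((∫ y, Real.exp (-Φ₁ y) ∂μ)⁻¹ * Real.exp (-Φ₁ x)) -
               Real.sqrt ((∫ y, Real.exp (-Φ₂ y) ∂μ)⁻¹ * Real.exp (-Φ₂ x))) ^ 2 ∂μ ≤
            C * ∫ x, |Φ₁ x - Φ₂ x| ^ 2 ∂μ :=
  ⟨(exp Ct + exp Ct ^ 3) / 4, by positivity,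
    fun _ _ _ _ _ _ hΦ₁ hΦ₂ h₁ h₂ => hellinger_sq_posterior_le hΦ₁ hΦ₂ h₁ h₂⟩

/-- Hellinger stability of the Bayesian posterior with respect to
the negative log-likelihood: there is a constant `C > 0` depending only on the
uniform bound `C̃` such that
`d_Hell(ν₁, ν₂)² = ½∫ (√(dν₁/dμ) - √(dν₂/dμ))² dμ ≤ C ∫ |Φ₁ - Φ₂|² dμ`,
where `dνᵢ/dμ = Zᵢ⁻¹ e^{-Φᵢ}` and `Zᵢ = ∫ e^{-Φᵢ} dμ`. -/
theorem hellinger_stability (Ct : ℝ) (hCt : 0 < Ct) :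
    ∃ C : ℝ, 0 < C ∧
      ∀ (X : Type) (_ : MeasurableSpace X) (μ : Measure X), IsProbabilityMeasure μ →
        ∀ (Φ₁ Φ₂ : X → ℝ), Measurable Φ₁ → Measurable Φ₂ →
          (∀ x, Φ₁ x ∈ Set.Icc (0 : ℝ) Ct) → (∀ x, Φ₂ x ∈ Set.Icc (0 : ℝ) Ct) →
          (1 / 2) * ∫ x,
              (Real.sqrt ((∫ y, Real.exp (-Φ₁ y) ∂μ)⁻¹ * Real.exp (-Φ₁ x)) -
               Real.sqrt ((∫ y, Real.exp (-Φ₂ y) ∂μ)⁻¹ * Real.exp (-Φ₂ x))) ^ 2 ∂μ ≤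
            C * ∫ x, |Φ₁ x - Φ₂ x| ^ 2 ∂μ :=
  hellinger_stability_general Ct
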